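/- Let k be an algebraically closed field and R = k[x,y,z]. For every choice of linear forms L_1, L_2, N_1, N_2 ∈ R_1, the degree-3 graded component of the ideal (L_1L_2, L_1^2) + (N_1N_2, N_1^2) has k-vector space dimension at most 9 (strictly less than dim R_3 = 10), and for a general choice of L_1, L_2, N_1, N_2 this dimension equals exactly 9. Equivalently, for M = Z_1^2Z_2 and n = 3, dim σ_2(X_M) = 8 < 9, so X_M has 2-defect 1. -/

import Mathlib

/-!
Upper bound: two linear forms in three variables have a common nonzero zero `p`, so `L₁` and
`N₁`, and with them the whole ideal `(L₁L₂, L₁²) + (N₁N₂, N₁²)`, vanish at `p`. Some cube `X i ^ 3`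
does not vanish at `p`, so the degree-3 part of the ideal is a proper subspace of `R₃`, which has
dimension `binom(5, 3) = 10`.

Lower bound: the nine cubics `x·L₁L₂, y·L₁L₂, z·L₁L₂, x·L₁², z·L₁², y·N₁N₂, z·N₁N₂, x·N₁², z·N₁²`
lie in that degree-3 part. Their coefficients on nine fixed monomials form a `9 × 9` matrix whose
determinant is a polynomial in the twelve coefficients of `L₁, L₂, N₁, N₂`. For
`(L₁, L₂, N₁, N₂) = (x, y, z, y)` the nine cubics are nine distinct monomials, so this polynomial
is nonzero, and wherever it does not vanish the nine cubics are linearly independent.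
-/

open MvPolynomial Finset

noncomputable def lin {k : Type*} [CommSemiring k] {n : ℕ} (c : Fin n → k) :
    MvPolynomial (Fin n) k :=
  ∑ i, C (c i) * X i

namespace MvPolynomial

variable {σ K : Type*} [Field K]

theorem finrank_homogeneousSubmodule [Fintype σ] (n : ℕ) :
    Module.finrank K (homogeneousSubmodule σ K n) = (Fintype.card σ + n - 1).choose n := by
  classical
  have hset : {d : σ →₀ ℕ | d.degree = n} = ((univ : Finset σ).finsuppAntidiag n : Set _) := by
    ext d; simp [Finsupp.degree_eq_sum]
  rw [homogeneousSubmodule_eq_finsupp_supported, hset, ← restrictSupport,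
    Module.finrank_eq_card_basis (basisRestrictSupport K _)]
  simp [card_finsuppAntidiag_nat_eq_choose]

theorem exists_ne_zero_forall_eval_eq_zero {ι : Type*} [Fintype ι] [Fintype σ]
    (L : ι → MvPolynomial σ K) (hL : ∀ i, (L i).IsHomogeneous 1)
    (hcard : Fintype.card ι < Fintype.card σ) :
    ∃ p : σ → K, p ≠ 0 ∧ ∀ i, eval p (L i) = 0 := by
  have hspan (i : ι) : L i ∈ Submodule.span K (Set.range (X : σ → MvPolynomial σ K)) := by
    rw [← homogeneousSubmodule_one_eq_span_X]; exact hL i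
  simp only [Submodule.mem_span_range_iff_exists_fun] at hspan
  choose a ha using hspan
  have hker : LinearMap.ker (Matrix.of a).mulVecLin ≠ ⊥ :=
    LinearMap.ker_ne_bot_of_finrank_lt (by simpa using hcard)
  obtain ⟨p, hp, hp0⟩ := (Submodule.ne_bot_iff _).mp hker
  refine ⟨p, hp0, fun i => ?_⟩
  have := congrFun (LinearMap.mem_ker.mp hp) i
  simpa [← ha, Matrix.mulVec, dotProduct, mul_comm] using this

noncomputable def degreePart (I : Ideal (MvPolynomial σ K)) (n : ℕ) :
    Submodule K (MvPolynomial σ K) :=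
  I.restrictScalars K ⊓ homogeneousSubmodule σ K n

theorem finrank_degreePart_lt [Fintype σ] {I : Ideal (MvPolynomial σ K)} {p : σ → K}
    (hp : p ≠ 0) (hI : I ≤ RingHom.ker (eval p)) (n : ℕ) :
    Module.finrank K (degreePart I n) < Module.finrank K (homogeneousSubmodule σ K n) := by
  have : Module.Finite K (homogeneousSubmodule σ K n) :=
    Module.Finite.iff_fg.mpr (homogeneousSubmodule_fg σ K n)
  refine Submodule.finrank_lt_finrank_of_lt (SetLike.lt_iff_le_and_exists.mpr
    ⟨inf_le_right, ?_⟩)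
  obtain ⟨i, hi⟩ := Function.ne_iff.mp hp
  refine ⟨X i ^ n, isHomogeneous_X_pow i n, fun h => pow_ne_zero n hi ?_⟩
  simpa using hI h.1

noncomputable def coeffMatrix {ι κ R : Type*} [CommSemiring R] (v : ι → MvPolynomial σ R)
    (e : κ → σ →₀ ℕ) : Matrix ι κ R :=
  Matrix.of fun i j => coeff (e j) (v i)

theorem coeffMatrix_map {ι κ R S : Type*} [CommSemiring R] [CommSemiring S] (f : R →+* S)
    (v : ι → MvPolynomial σ R) (e : κ → σ →₀ ℕ) :
    (coeffMatrix v e).map f = coeffMatrix (fun i => map f (v i)) e := by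
  ext i j; simp [coeffMatrix, coeff_map]

theorem linearIndependent_of_det_coeffMatrix_ne_zero {ι : Type*} [Fintype ι] [DecidableEq ι]
    {v : ι → MvPolynomial σ K} {e : ι → σ →₀ ℕ} (h : (coeffMatrix v e).det ≠ 0) :
    LinearIndependent K v :=
  .of_comp (LinearMap.pi fun j => lcoeff K (e j)) (Matrix.linearIndependent_rows_of_det_ne_zero h)

end MvPolynomial

section Lin

variable {R : Type*} [CommSemiring R] {n : ℕ}

theorem map_lin {S : Type*} [CommSemiring S] (f : R →+* S) (c : Fin n → R) :
    map f (lin c) = lin (f ∘ c) := by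
  simp [lin]

theorem isHomogeneous_lin (c : Fin n → R) : (lin c).IsHomogeneous 1 :=
  IsHomogeneous.sum _ _ _ fun i _ => isHomogeneous_C_mul_X (c i) i

theorem lin_single (j : Fin n) : lin (Pi.single j 1 : Fin n → R) = X j := by
  simp [lin, Pi.single_apply]

end Lin

section TangentIdeal

variable {σ K : Type*} [Field K]

noncomputable def tangentIdeal (L₁ L₂ : MvPolynomial σ K) : Ideal (MvPolynomial σ K) :=
  Ideal.span {L₁ * L₂, L₁ ^ 2}

theorem tangentIdeal_le_ker_eval {L₁ : MvPolynomial σ K} (L₂ : MvPolynomial σ K) {p : σ → K}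
    (hp : eval p L₁ = 0) : tangentIdeal L₁ L₂ ≤ RingHom.ker (eval p) := by
  rw [tangentIdeal, Ideal.span_le, Set.insert_subset_iff, Set.singleton_subset_iff]
  simp [hp]

theorem finrank_degreePart_tangentIdeal_sup_le {L₁ N₁ : MvPolynomial (Fin 3) K}
    (L₂ N₂ : MvPolynomial (Fin 3) K) (hL₁ : L₁.IsHomogeneous 1) (hN₁ : N₁.IsHomogeneous 1) :
    Module.finrank K (degreePart (tangentIdeal L₁ L₂ ⊔ tangentIdeal N₁ N₂) 3) ≤ 9 := by
  obtain ⟨p, hp, hpL⟩ := exists_ne_zero_forall_eval_eq_zero ![L₁, N₁]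
    (by simp [Fin.forall_fin_two, hL₁, hN₁]) (by simp)
  have hI := sup_le (tangentIdeal_le_ker_eval L₂ (hpL 0)) (tangentIdeal_le_ker_eval N₂ (hpL 1))
  have := finrank_degreePart_lt hp hI 3
  rw [finrank_homogeneousSubmodule] at this
  exact Nat.le_of_lt_succ this

end TangentIdeal

section TangentCubics

variable {R : Type*} [CommSemiring R]

noncomputable def tangentCubics (L₁ L₂ N₁ N₂ : MvPolynomial (Fin 3) R) :
    Fin 9 → MvPolynomial (Fin 3) R :=
  ![X 0 * (L₁ * L₂), X 1 * (L₁ * L₂), X 2 * (L₁ * L₂), X 0 * L₁ ^ 2, X 2 * L₁ ^ 2,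
    X 1 * (N₁ * N₂), X 2 * (N₁ * N₂), X 0 * N₁ ^ 2, X 2 * N₁ ^ 2]

def cubicExponents : Fin 9 → Fin 3 → ℕ :=
  ![![2, 1, 0], ![1, 2, 0], ![1, 1, 1], ![3, 0, 0], ![2, 0, 1],
    ![0, 2, 1], ![0, 1, 2], ![1, 0, 2], ![0, 0, 3]]

noncomputable def cubicMonomials (i : Fin 9) : Fin 3 →₀ ℕ :=
  Finsupp.equivFunOnFinite.symm (cubicExponents i)

theorem cubicMonomials_injective : Function.Injective cubicMonomials :=
  Finsupp.equivFunOnFinite.symm.injective.comp (by decide : Function.Injective cubicExponents)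

theorem tangentCubics_X (i : Fin 9) :
    tangentCubics (X 0) (X 1) (X 2) (X 1) i =
      (monomial (cubicMonomials i) 1 : MvPolynomial (Fin 3) R) := by
  fin_cases i <;> simp [tangentCubics, X, pow_two, monomial_mul, cubicMonomials] <;>
    congr 2 <;> ext m <;> fin_cases m <;> simp [cubicExponents]

theorem coeffMatrix_tangentCubics_X :
    coeffMatrix (tangentCubics (X 0) (X 1) (X 2) (X 1) : Fin 9 → MvPolynomial (Fin 3) R)
      cubicMonomials = 1 := by
  ext i j
  simp [coeffMatrix, tangentCubics_X, coeff_monomial, Matrix.one_apply,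
    cubicMonomials_injective.eq_iff]

theorem map_tangentCubics {S : Type*} [CommSemiring S] (f : R →+* S)
    (L₁ L₂ N₁ N₂ : MvPolynomial (Fin 3) R) (i : Fin 9) :
    map f (tangentCubics L₁ L₂ N₁ N₂ i) =
      tangentCubics (map f L₁) (map f L₂) (map f N₁) (map f N₂) i := by
  fin_cases i <;> simp [tangentCubics]

end TangentCubics

section LowerBound

variable {K : Type*} [Field K]

theorem tangentCubics_mem_degreePart {L₁ L₂ N₁ N₂ : MvPolynomial (Fin 3) K}
    (hL₁ : L₁.IsHomogeneous 1) (hL₂ : L₂.IsHomogeneous 1)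
    (hN₁ : N₁.IsHomogeneous 1) (hN₂ : N₂.IsHomogeneous 1) (i : Fin 9) :
    tangentCubics L₁ L₂ N₁ N₂ i ∈ degreePart (tangentIdeal L₁ L₂ ⊔ tangentIdeal N₁ N₂) 3 := by
  have mem {g : MvPolynomial (Fin 3) K} (hg : g ∈ tangentIdeal L₁ L₂ ⊔ tangentIdeal N₁ N₂)
      (hg2 : g.IsHomogeneous 2) (m : Fin 3) :
      X m * g ∈ degreePart (tangentIdeal L₁ L₂ ⊔ tangentIdeal N₁ N₂) 3 :=
    ⟨Ideal.mul_mem_left _ _ hg, (isHomogeneous_X K m).mul hg2⟩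
  have hLL := mem (Ideal.mem_sup_left (Ideal.subset_span (Set.mem_insert _ _))) (hL₁.mul hL₂)
  have hL := mem (Ideal.mem_sup_left (Ideal.subset_span (Set.mem_insert_of_mem _ rfl)))
    (hL₁.pow 2)
  have hNN := mem (Ideal.mem_sup_right (Ideal.subset_span (Set.mem_insert _ _))) (hN₁.mul hN₂)
  have hN := mem (Ideal.mem_sup_right (Ideal.subset_span (Set.mem_insert_of_mem _ rfl)))
    (hN₁.pow 2)
  fin_cases i
  exacts [hLL 0, hLL 1, hLL 2, hL 0, hL 2, hNN 1, hNN 2, hN 0, hN 2]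

theorem le_finrank_degreePart_tangentIdeal_sup {L₁ L₂ N₁ N₂ : MvPolynomial (Fin 3) K}
    (hL₁ : L₁.IsHomogeneous 1) (hL₂ : L₂.IsHomogeneous 1)
    (hN₁ : N₁.IsHomogeneous 1) (hN₂ : N₂.IsHomogeneous 1)
    (hdet : (coeffMatrix (tangentCubics L₁ L₂ N₁ N₂) cubicMonomials).det ≠ 0) :
    9 ≤ Module.finrank K (degreePart (tangentIdeal L₁ L₂ ⊔ tangentIdeal N₁ N₂) 3) := by
  have : Module.Finite K (homogeneousSubmodule (Fin 3) K 3) :=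
    Module.Finite.iff_fg.mpr (homogeneousSubmodule_fg _ K 3)
  have : Module.Finite K (degreePart (tangentIdeal L₁ L₂ ⊔ tangentIdeal N₁ N₂) 3) :=
    Submodule.finiteDimensional_of_le inf_le_right
  let v (i : Fin 9) : degreePart (tangentIdeal L₁ L₂ ⊔ tangentIdeal N₁ N₂) 3 :=
    ⟨_, tangentCubics_mem_degreePart hL₁ hL₂ hN₁ hN₂ i⟩
  have hv : LinearIndependent K v :=
    .of_comp (Submodule.subtype _) (linearIndependent_of_det_coeffMatrix_ne_zero hdet)
  simpa using hv.fintype_card_le_finrank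

variable (K) in
noncomputable def genericLin (i : Fin 4) :
    MvPolynomial (Fin 3) (MvPolynomial (Fin 4 × Fin 3) K) :=
  lin fun x => X (i, x)

variable (K) in
noncomputable def tangentCubicsDet : MvPolynomial (Fin 4 × Fin 3) K :=
  (coeffMatrix (tangentCubics (genericLin K 0) (genericLin K 1) (genericLin K 2)
    (genericLin K 3)) cubicMonomials).det

theorem eval_tangentCubicsDet (c : Fin 4 × Fin 3 → K) :
    eval c (tangentCubicsDet K) =
      (coeffMatrix (tangentCubics (lin fun x => c (0, x)) (lin fun x => c (1, x))
        (lin fun x => c (2, x)) (lin fun x => c (3, x))) cubicMonomials).det := by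
  rw [tangentCubicsDet, RingHom.map_det, RingHom.mapMatrix_apply, coeffMatrix_map]
  simp only [map_tangentCubics, genericLin, map_lin, Function.comp_def, eval_X]

theorem tangentCubicsDet_ne_zero : tangentCubicsDet K ≠ 0 := by
  intro h
  -- the point `(L₁, L₂, N₁, N₂) = (x, y, z, y)`
  have := eval_tangentCubicsDet (K := K)
    fun q => (Pi.single (![0, 1, 2, 1] q.1) 1 : Fin 3 → K) q.2
  simp [h, lin_single, coeffMatrix_tangentCubics_X] at this

end LowerBound

theorem stmt10_general {k : Type*} [Field k] :
    (∀ L₁ L₂ N₁ N₂ : MvPolynomial (Fin 3) k,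
      L₁.IsHomogeneous 1 → L₂.IsHomogeneous 1 → N₁.IsHomogeneous 1 → N₂.IsHomogeneous 1 →
        Module.finrank k
          ↥(Submodule.restrictScalars k
              (Ideal.span {L₁ * L₂, L₁ ^ 2} ⊔ Ideal.span {N₁ * N₂, N₁ ^ 2})
            ⊓ homogeneousSubmodule (Fin 3) k 3) ≤ 9) ∧
    (∃ P : MvPolynomial (Fin 4 × Fin 3) k, P ≠ 0 ∧
      ∀ c : Fin 4 × Fin 3 → k, eval c P ≠ 0 →
        Module.finrank k
          ↥(Submodule.restrictScalars k
              (Ideal.span {lin (fun x => c (0, x)) * lin (fun x => c (1, x)),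
                  lin (fun x => c (0, x)) ^ 2} ⊔
               Ideal.span {lin (fun x => c (2, x)) * lin (fun x => c (3, x)),
                  lin (fun x => c (2, x)) ^ 2})
            ⊓ homogeneousSubmodule (Fin 3) k 3) = 9) := by
  refine ⟨fun L₁ L₂ N₁ N₂ hL₁ _ hN₁ _ => finrank_degreePart_tangentIdeal_sup_le L₂ N₂ hL₁ hN₁,
    tangentCubicsDet k, tangentCubicsDet_ne_zero, fun c hc => ?_⟩
  rw [eval_tangentCubicsDet] at hc
  exact le_antisymm
    (finrank_degreePart_tangentIdeal_sup_le _ _ (isHomogeneous_lin _) (isHomogeneous_lin _))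
    (le_finrank_degreePart_tangentIdeal_sup (isHomogeneous_lin _) (isHomogeneous_lin _)
      (isHomogeneous_lin _) (isHomogeneous_lin _) hc)

/-- In `R = k[x,y,z]`: for every choice of linear forms `L₁, L₂, N₁, N₂`, the degree-`3`
component of `(L₁L₂, L₁²) + (N₁N₂, N₁²)` has `k`-dimension at most `9` (strictly less than
`dim R₃ = 10`), and for a general choice it is exactly `9`.  By Terracini's Lemma this says
`dim σ₂(X_M) = 8 < 9` for `M = Z₁²Z₂` and `n = 3`: the `2`-defect is `1`. -/
theorem stmt10 {k : Type*} [Field k] [IsAlgClosed k] :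
    (∀ L₁ L₂ N₁ N₂ : MvPolynomial (Fin 3) k,
      L₁.IsHomogeneous 1 → L₂.IsHomogeneous 1 → N₁.IsHomogeneous 1 → N₂.IsHomogeneous 1 →
        Module.finrank k
          ↥(Submodule.restrictScalars k
              (Ideal.span {L₁ * L₂, L₁ ^ 2} ⊔ Ideal.span {N₁ * N₂, N₁ ^ 2})
            ⊓ homogeneousSubmodule (Fin 3) k 3) ≤ 9) ∧
    (∃ P : MvPolynomial (Fin 4 × Fin 3) k, P ≠ 0 ∧
      ∀ c : Fin 4 × Fin 3 → k, eval c P ≠ 0 →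
        Module.finrank k
          ↥(Submodule.restrictScalars k
              (Ideal.span {lin (fun x => c (0, x)) * lin (fun x => c (1, x)),
                  lin (fun x => c (0, x)) ^ 2} ⊔
               Ideal.span {lin (fun x => c (2, x)) * lin (fun x => c (3, x)),
                  lin (fun x => c (2, x)) ^ 2})
            ⊓ homogeneousSubmodule (Fin 3) k 3) = 9) :=
  stmt10_general
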